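/- Let G be a partial cube isometrically embedded in Q_m, H a gated subgraph of G, and H' an isometric subgraph of Q_m with H ⊆ H' ⊆ C(H), where C(H) is the smallest subcube of Q_m containing H. Let G' be the subgraph of Q_m induced by V(G) ∪ V(H'). Then: (i) G' is an isometric subgraph of Q_m; (ii) H' is gated in G' and for every vertex v of G its gates in H and in H' coincide; (iii) the VC-dimension of G' equals max(vcd(G), vcd(H')). -/

import Mathlib

/-! The gate in `H` of a vertex of `S` is also a Hamming gate for the whole hull `C(H) ⊇ H'`.
Hence a geodesic in `S` to the gate followed by a geodesic in `H'` is a geodesic of the cube,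
which gives isometry of `S ∪ H'` and the gates in `H'`. If `S ∪ H'` shatters `X` but `S` does not,
every coordinate of `X` varies on `H` (otherwise the gate of a vertex of `S` realizing a flipped
pattern would realize the missing one inside `S`); a gate agrees with its vertex on such
coordinates, so `H'` already shatters `X`. -/

open Finset
open scoped Classical

variable {U : Type*}

/-- Hamming distance between two vertices of the hypercube `U → Bool`. -/
def hDist [Fintype U] [DecidableEq U] (x y : U → Bool) : ℕ :=
  (Finset.univ.filter fun i => x i ≠ y i).card

/-- The hypercube graph on `U → Bool`: two vertices are adjacent iff they differ
in exactly one coordinate. -/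
def cubeGraph (U : Type*) [Fintype U] [DecidableEq U] : SimpleGraph (U → Bool) where
  Adj x y := hDist x y = 1
  symm := by
    constructor
    intro x y h
    have hs : (Finset.univ.filter fun i => y i ≠ x i) =
        (Finset.univ.filter fun i => x i ≠ y i) := by
      apply Finset.filter_congr
      intro i _
      exact ne_comm
    simpa [hDist, hs] using h
  loopless := by
    constructor
    intro x h
    simp [hDist] at h

/-- Distance between `x` and `y` inside the subgraph of the hypercube induced by `A`
(`0` if one of them is not in `A`). -/
noncomputable def dIn [Fintype U] [DecidableEq U] (A : Set (U → Bool)) (x y : U → Bool) : ℕ :=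
  if h : x ∈ A ∧ y ∈ A then ((cubeGraph U).induce A).dist ⟨x, h.1⟩ ⟨y, h.2⟩ else 0

/-- A set of vertices of the hypercube is a partial cube if its induced graph is connected
and the induced graph distance coincides with the Hamming distance
(i.e. it is an isometric subgraph of the hypercube). -/
def IsPartialCube [Fintype U] [DecidableEq U] (A : Set (U → Bool)) : Prop :=
  ((cubeGraph U).induce A).Connected ∧ ∀ x ∈ A, ∀ y ∈ A, dIn A x y = hDist x y

/-- `A` shatters the coordinate set `X`. -/
def Shatters [Fintype U] [DecidableEq U] (A : Set (U → Bool)) (X : Finset U) : Prop :=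
  ∀ g : U → Bool, ∃ a ∈ A, ∀ i ∈ X, a i = g i

/-- `A` strongly shatters `X`: it contains a full subcube over the coordinates `X`. -/
def StronglyShatters [Fintype U] [DecidableEq U] (A : Set (U → Bool)) (X : Finset U) : Prop :=
  ∃ a : U → Bool, ∀ g : U → Bool, (fun i => if i ∈ X then g i else a i) ∈ A

/-- An ample set family: every shattered set is strongly shattered. -/
def IsAmple [Fintype U] [DecidableEq U] (A : Set (U → Bool)) : Prop :=
  ∀ X : Finset U, Shatters A X → StronglyShatters A X

/-- The smallest subcube of the hypercube containing `H`. -/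
def cubeHull (H : Set (U → Bool)) : Set (U → Bool) := {f | ∀ i, ∃ h ∈ H, f i = h i}

section Hamming

variable [Fintype U] [DecidableEq U]

theorem hDist_eq_hammingDist (x y : U → Bool) : hDist x y = hammingDist x y := rfl

theorem hDist_eq_sum (x y : U → Bool) : hDist x y = ∑ i, if x i ≠ y i then 1 else 0 :=
  Finset.card_filter _ _

theorem hDist_add_hDist_eq_iff {x y z : U → Bool} :
    hDist x y + hDist y z = hDist x z ↔ ∀ i, y i = x i ∨ y i = z i := by
  simp only [hDist_eq_sum, ← Finset.sum_add_distrib]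
  rw [eq_comm, Finset.sum_eq_sum_iff_of_le fun i _ => ?_]
  · refine forall_congr' fun i => ?_
    cases x i <;> cases y i <;> cases z i <;> simp
  · cases x i <;> cases y i <;> cases z i <;> simp

/-- `g` need not lie in `A`: gates taken in `H` are used as gates for the whole hull `C(H)`. -/
def IsHammingGate (A : Set (U → Bool)) (v g : U → Bool) : Prop :=
  ∀ y ∈ A, hDist v g + hDist g y = hDist v y

theorem IsHammingGate.apply_eq_or_apply_eq {A : Set (U → Bool)} {v g y : U → Bool}
    (hg : IsHammingGate A v g) (hy : y ∈ A) (i : U) : g i = v i ∨ g i = y i :=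
  hDist_add_hDist_eq_iff.mp (hg y hy) i

theorem IsHammingGate.cubeHull {H : Set (U → Bool)} {v g : U → Bool}
    (hg : IsHammingGate H v g) : IsHammingGate (cubeHull H) v g := by
  refine fun y hy => hDist_add_hDist_eq_iff.mpr fun i => ?_
  obtain ⟨h, hh, hyh⟩ := hy i
  rw [hyh]
  exact hg.apply_eq_or_apply_eq hh i

theorem IsHammingGate.apply_eq_of_apply_ne {A : Set (U → Bool)} {v g h₁ h₂ : U → Bool}
    (hg : IsHammingGate A v g) (h₁A : h₁ ∈ A) (h₂A : h₂ ∈ A) {i : U} (hne : h₁ i ≠ h₂ i) :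
    g i = v i := by
  rcases hg.apply_eq_or_apply_eq h₁A i with h | h₁i
  · exact h
  rcases hg.apply_eq_or_apply_eq h₂A i with h | h₂i
  · exact h
  exact absurd (h₁i.symm.trans h₂i) hne

end Hamming

theorem subset_cubeHull (H : Set (U → Bool)) : H ⊆ cubeHull H :=
  fun h hh _ => ⟨h, hh, rfl⟩

theorem apply_eq_of_mem_cubeHull {H : Set (U → Bool)} {i : U}
    (hconst : ∀ h₁ ∈ H, ∀ h₂ ∈ H, h₁ i = h₂ i) {a b : U → Bool}
    (ha : a ∈ cubeHull H) (hb : b ∈ cubeHull H) : a i = b i := by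
  obtain ⟨h₁, hh₁, ha⟩ := ha i
  obtain ⟨h₂, hh₂, hb⟩ := hb i
  rw [ha, hb]
  exact hconst h₁ hh₁ h₂ hh₂

theorem Shatters.mono [Fintype U] [DecidableEq U] {A B : Set (U → Bool)} {X : Finset U}
    (hA : Shatters A X) (hAB : A ⊆ B) : Shatters B X := fun g =>
  let ⟨a, ha, hag⟩ := hA g
  ⟨a, hAB ha, hag⟩

section PartialCube

variable [Fintype U] [DecidableEq U]

theorem hDist_le_length {A : Set (U → Bool)} {x y : A}
    (W : ((cubeGraph U).induce A).Walk x y) : hDist x.1 y.1 ≤ W.length := by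
  induction W with
  | nil => simp [hDist_eq_hammingDist]
  | @cons a b c hab W ih =>
    have hab : hDist a.1 b.1 = 1 := hab
    rw [SimpleGraph.Walk.length_cons]
    have := hammingDist_triangle a.1 b.1 c.1
    simp only [hDist_eq_hammingDist] at *
    omega

theorem isPartialCube_iff {A : Set (U → Bool)} :
    IsPartialCube A ↔ A.Nonempty ∧
      ∀ x y : A, ∃ W : ((cubeGraph U).induce A).Walk x y, W.length = hDist x.1 y.1 := by
  constructor
  · rintro ⟨hconn, hdist⟩
    refine ⟨Set.nonempty_coe_sort.mp hconn.nonempty, fun x y => ?_⟩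
    obtain ⟨W, hW⟩ := hconn.exists_walk_length_eq_dist x y
    refine ⟨W, hW.trans ?_⟩
    simpa [dIn, x.2, y.2] using hdist x x.2 y y.2
  · rintro ⟨hne, hwalk⟩
    have hconn : ((cubeGraph U).induce A).Connected :=
      { preconnected := fun x y => ⟨(hwalk x y).choose⟩
        nonempty := hne.to_subtype }
    refine ⟨hconn, fun x hx y hy => ?_⟩
    obtain ⟨W, hW⟩ := hwalk ⟨x, hx⟩ ⟨y, hy⟩
    obtain ⟨W₀, hW₀⟩ := hconn.exists_walk_length_eq_dist ⟨x, hx⟩ ⟨y, hy⟩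
    rw [dIn, dif_pos ⟨hx, hy⟩]
    exact le_antisymm (hW ▸ SimpleGraph.dist_le W) (hW₀ ▸ hDist_le_length W₀)

theorem IsPartialCube.exists_walk_of_subset {A B : Set (U → Bool)} (hA : IsPartialCube A)
    (hAB : A ⊆ B) {x y : U → Bool} (hx : x ∈ A) (hy : y ∈ A) :
    ∃ W : ((cubeGraph U).induce B).Walk ⟨x, hAB hx⟩ ⟨y, hAB hy⟩, W.length = hDist x y := by
  obtain ⟨W, hW⟩ := (isPartialCube_iff.mp hA).2 ⟨x, hx⟩ ⟨y, hy⟩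
  exact ⟨W.map (SimpleGraph.induceHomOfLE _ hAB).toHom, (SimpleGraph.Walk.length_map _ _).trans hW⟩

theorem IsPartialCube.dIn_eq_add_iff {A : Set (U → Bool)} (hA : IsPartialCube A)
    {v g y : U → Bool} (hv : v ∈ A) (hg : g ∈ A) (hy : y ∈ A) :
    dIn A v y = dIn A v g + dIn A g y ↔ hDist v g + hDist g y = hDist v y := by
  rw [hA.2 v hv y hy, hA.2 v hv g hg, hA.2 g hg y hy, eq_comm]

end PartialCube

section Extension

variable [Fintype U] [DecidableEq U] {S H H' : Set (U → Bool)}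

theorem isPartialCube_union (hS : IsPartialCube S) (hH' : IsPartialCube H') (hHS : H ⊆ S)
    (hHH' : H ⊆ H') (hH'C : H' ⊆ cubeHull H)
    (hgate : ∀ v ∈ S, ∃ g ∈ H, IsHammingGate (cubeHull H) v g) :
    IsPartialCube (S ∪ H') := by
  have mixed : ∀ x (hx : x ∈ S) y (hy : y ∈ H'), ∃ W : ((cubeGraph U).induce (S ∪ H')).Walk
      ⟨x, .inl hx⟩ ⟨y, .inr hy⟩, W.length = hDist x y := by
    intro x hx y hy
    obtain ⟨g, hgH, hg⟩ := hgate x hx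
    obtain ⟨W₁, hW₁⟩ := hS.exists_walk_of_subset Set.subset_union_left hx (hHS hgH)
    obtain ⟨W₂, hW₂⟩ := hH'.exists_walk_of_subset Set.subset_union_right (hHH' hgH) hy
    exact ⟨W₁.append W₂, by rw [SimpleGraph.Walk.length_append, hW₁, hW₂, hg y (hH'C hy)]⟩
  refine isPartialCube_iff.mpr ⟨hS.1.nonempty.elim fun x => ⟨x, .inl x.2⟩, ?_⟩
  rintro ⟨x, hx | hx⟩ ⟨y, hy | hy⟩
  · exact hS.exists_walk_of_subset Set.subset_union_left hx hy
  · exact mixed x hx y hy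
  · obtain ⟨W, hW⟩ := mixed y hy x hx
    exact ⟨W.reverse, by rw [SimpleGraph.Walk.length_reverse, hW, hDist_eq_hammingDist,
      hDist_eq_hammingDist, hammingDist_comm]⟩
  · exact hH'.exists_walk_of_subset Set.subset_union_right hx hy

/-- If a coordinate `i₀ ∈ X` were constant on `H`, hence on `H' ⊆ C(H)`, then a pattern on `X`
missed by `S` is realized by some `y ∈ H'`, and its flip at `i₀` by some `u ∈ S`; the gate of `u`
in `H` lies between `u` and `y`, so it realizes the pattern inside `S`. -/
theorem exists_apply_ne_of_shatters_union (hHS : H ⊆ S) (hH'C : H' ⊆ cubeHull H)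
    (hgate : ∀ v ∈ S, ∃ g ∈ H, IsHammingGate (cubeHull H) v g) {X : Finset U}
    (hX : Shatters (S ∪ H') X) (hXS : ¬ Shatters S X) {i₀ : U} (hi₀ : i₀ ∈ X) :
    ∃ h₁ ∈ H, ∃ h₂ ∈ H, h₁ i₀ ≠ h₂ i₀ := by
  by_contra! hconst
  obtain ⟨g, hg⟩ : ∃ g : U → Bool, ∀ a ∈ S, ¬ ∀ i ∈ X, a i = g i := by
    simpa [_root_.Shatters] using hXS
  obtain ⟨y, hy, hyg⟩ := hX g
  have hyH' : y ∈ H' := hy.resolve_left fun hyS => hg y hyS hyg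
  obtain ⟨u, hu, hug⟩ := hX (Function.update g i₀ (!g i₀))
  have hui₀ : u i₀ ≠ y i₀ := by simp [hug i₀ hi₀, hyg i₀ hi₀]
  have huS : u ∈ S := hu.resolve_right fun huH' =>
    hui₀ (apply_eq_of_mem_cubeHull hconst (hH'C huH') (hH'C hyH'))
  obtain ⟨p, hpH, hp⟩ := hgate u huS
  refine hg p (hHS hpH) fun i hi => ?_
  by_cases hii₀ : i = i₀
  · subst hii₀
    rw [← hyg i hi]
    exact apply_eq_of_mem_cubeHull hconst (subset_cubeHull H hpH) (hH'C hyH')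
  · have hui : u i = g i := by simp [hug i hi, hii₀]
    rcases hp.apply_eq_or_apply_eq (hH'C hyH') i with h | h
    · rw [h, hui]
    · rw [h, hyg i hi]

theorem shatters_union_iff (hHS : H ⊆ S) (hHH' : H ⊆ H') (hH'C : H' ⊆ cubeHull H)
    (hgate : ∀ v ∈ S, ∃ g ∈ H, IsHammingGate (cubeHull H) v g) {X : Finset U} :
    Shatters (S ∪ H') X ↔ Shatters S X ∨ Shatters H' X := by
  refine ⟨fun hX => or_iff_not_imp_left.mpr fun hXS a => ?_,
    fun h => h.elim (·.mono Set.subset_union_left) (·.mono Set.subset_union_right)⟩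
  obtain ⟨z, hz | hz, hza⟩ := hX a
  · obtain ⟨p, hpH, hp⟩ := hgate z hz
    refine ⟨p, hHH' hpH, fun i hi => ?_⟩
    obtain ⟨h₁, hh₁, h₂, hh₂, hne⟩ :=
      exists_apply_ne_of_shatters_union hHS hH'C hgate hX hXS hi
    rw [hp.apply_eq_of_apply_ne (subset_cubeHull H hh₁) (subset_cubeHull H hh₂) hne, hza i hi]
  · exact ⟨z, hz, hza⟩

end Extension

/-- Let `S` be a partial cube, `H` a gated subgraph of `S`, and `H'` an
isometric subgraph of the hypercube with `H ⊆ H' ⊆ C(H)`.  Let `S ∪ H'` be the extension.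
Then (i) `S ∪ H'` is an isometric subgraph (partial cube); (ii) `H'` is gated in `S ∪ H'`
and for every vertex of `S` its gates in `H` and in `H'` coincide; (iii) the VC-dimension of
`S ∪ H'` is the maximum of those of `S` and `H'`. -/
theorem stmt19 [Fintype U] [DecidableEq U] (S H H' : Set (U → Bool))
    (hS : IsPartialCube S) (hHS : H ⊆ S)
    (hgated : ∀ v ∈ S, ∃ g ∈ H, ∀ y ∈ H, dIn S v y = dIn S v g + dIn S g y)
    (hHH' : H ⊆ H') (hH'C : H' ⊆ cubeHull H) (hH' : IsPartialCube H') :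
    IsPartialCube (S ∪ H') ∧
    (∀ v ∈ S ∪ H', ∃ g ∈ H',
      ∀ y ∈ H', dIn (S ∪ H') v y = dIn (S ∪ H') v g + dIn (S ∪ H') g y) ∧
    (∀ v ∈ S, ∀ g ∈ H, (∀ y ∈ H, dIn S v y = dIn S v g + dIn S g y) →
      g ∈ H' ∧ ∀ y ∈ H', dIn (S ∪ H') v y = dIn (S ∪ H') v g + dIn (S ∪ H') g y) ∧
    (∀ d : ℕ, (∀ X : Finset U, Shatters (S ∪ H') X → X.card ≤ d) ↔
      ((∀ X : Finset U, Shatters S X → X.card ≤ d) ∧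
        (∀ X : Finset U, Shatters H' X → X.card ≤ d))) := by
  have gate_hamming : ∀ v ∈ S, ∀ g ∈ H, (∀ y ∈ H, dIn S v y = dIn S v g + dIn S g y) →
      IsHammingGate (cubeHull H) v g := fun v hv g hg hvg =>
    IsHammingGate.cubeHull fun y hy => (hS.dIn_eq_add_iff hv (hHS hg) (hHS hy)).mp (hvg y hy)
  have hgate : ∀ v ∈ S, ∃ g ∈ H, IsHammingGate (cubeHull H) v g := fun v hv =>
    let ⟨g, hg, hvg⟩ := hgated v hv
    ⟨g, hg, gate_hamming v hv g hg hvg⟩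
  have hU := isPartialCube_union hS hH' hHS hHH' hH'C hgate
  have gate_in_union : ∀ v ∈ S, ∀ g ∈ H, IsHammingGate (cubeHull H) v g →
      ∀ y ∈ H', dIn (S ∪ H') v y = dIn (S ∪ H') v g + dIn (S ∪ H') g y := fun v hv g hg hvg y hy =>
    (hU.dIn_eq_add_iff (.inl hv) (.inr (hHH' hg)) (.inr hy)).mpr (hvg y (hH'C hy))
  refine ⟨hU, fun v hv => ?_, fun v hv g hg hvg => ⟨hHH' hg, gate_in_union v hv g hg
    (gate_hamming v hv g hg hvg)⟩, fun d => ?_⟩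
  · rcases hv with hvS | hvH'
    · obtain ⟨g, hg, hvg⟩ := hgate v hvS
      exact ⟨g, hHH' hg, gate_in_union v hvS g hg hvg⟩
    · refine ⟨v, hvH', fun y hy => (hU.dIn_eq_add_iff (.inr hvH') (.inr hvH') (.inr hy)).mpr ?_⟩
      simp [hDist_eq_hammingDist]
  · simp only [shatters_union_iff hHS hHH' hH'C hgate, or_imp, forall_and]
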